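/- arXiv:2106.13659 — 4 statements merged into one kernel-verified Lean document; each statement's English description precedes it below -/
import Mathlib

section
/- Let x₀, x₁, x₂, x₃ be affinely independent points of ℝ³ and let A : ℝ³ → ℝ³ be an affine map with linear part L. Then cm(x₀,x₁,x₂,x₃) > 0 and (det L)² = cm(A x₀, A x₁, A x₂, A x₃) / cm(x₀,x₁,x₂,x₃); equivalently, |det L| = √( cm(A x₀, A x₁, A x₂, A x₃) / cm(x₀,x₁,x₂,x₃) ). -/
/-! In coordinates with respect to an orthonormal basis, expanding the Cayley–Menger determinant
of four points gives `cm x = 8 * det (x₁ - x₀, x₂ - x₀, x₃ - x₀) ^ 2` (that is, `288 vol²`).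
An affine map multiplies this edge determinant by the determinant of its linear part, and
affine independence makes it nonzero. -/

/-- The Cayley–Menger matrix of the `n` points `x 0, …, x (n-1)`:
the `(n+1) × (n+1)` matrix whose `(0,0)` entry is `0`, whose remaining entries in
row `0` and column `0` are `1`, and whose `(i+1, j+1)` entry is `dist (x i) (x j) ^ 2`. -/
noncomputable def cmMatrix {E : Type*} [MetricSpace E] {n : ℕ} (x : Fin n → E) :
    Matrix (Fin (n + 1)) (Fin (n + 1)) ℝ :=
  Matrix.of fun i j =>
    Fin.cases (Fin.cases (0 : ℝ) (fun _ => 1) j)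
      (fun i' => Fin.cases (1 : ℝ) (fun j' => dist (x i') (x j') ^ 2) j) i

/-- The Cayley–Menger determinant of the points `x 0, …, x (n-1)`. -/
noncomputable def cm {E : Type*} [MetricSpace E] {n : ℕ} (x : Fin n → E) : ℝ :=
  (cmMatrix x).det

open Module

theorem AffineIndependent.linearIndependent_vsub_succ {k V P : Type*} [Ring k]
    [AddCommGroup V] [Module k V] [AddTorsor V P] {n : ℕ} {x : Fin (n + 1) → P}
    (hx : AffineIndependent k x) : LinearIndependent k fun i : Fin n => x i.succ -ᵥ x 0 :=
  ((affineIndependent_iff_linearIndependent_vsub k x 0).mp hx).comp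
    (fun i => ⟨i.succ, i.succ_ne_zero⟩) fun _ _ h => Fin.succ_injective _ (congrArg Subtype.val h)

section

variable {V P : Type*} [NormedAddCommGroup V] [InnerProductSpace ℝ V] [MetricSpace P]
  [NormedAddTorsor V P]

theorem dist_sq_eq_sum_sq_repr_vsub {ι : Type*} [Fintype ι] (b : OrthonormalBasis ι ℝ V)
    (p q o : P) : dist p q ^ 2 = ∑ k, (b.repr (p -ᵥ o) k - b.repr (q -ᵥ o) k) ^ 2 := by
  rw [dist_eq_norm_vsub V, ← vsub_sub_vsub_cancel_right p q o, ← b.repr.norm_map,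
    EuclideanSpace.norm_sq_eq, map_sub]
  simp [Real.norm_eq_abs, sq_abs]

theorem cm_eq_eight_mul_det_sq (b : OrthonormalBasis (Fin 3) ℝ V) (x : Fin 4 → P) :
    cm x = 8 * b.toBasis.det (fun i => x i.succ -ᵥ x 0) ^ 2 := by
  have hmat : cmMatrix x = !![0, 1, 1, 1, 1;
      1, dist (x 0) (x 0) ^ 2, dist (x 0) (x 1) ^ 2, dist (x 0) (x 2) ^ 2, dist (x 0) (x 3) ^ 2;
      1, dist (x 1) (x 0) ^ 2, dist (x 1) (x 1) ^ 2, dist (x 1) (x 2) ^ 2, dist (x 1) (x 3) ^ 2;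
      1, dist (x 2) (x 0) ^ 2, dist (x 2) (x 1) ^ 2, dist (x 2) (x 2) ^ 2, dist (x 2) (x 3) ^ 2;
      1, dist (x 3) (x 0) ^ 2, dist (x 3) (x 1) ^ 2, dist (x 3) (x 2) ^ 2, dist (x 3) (x 3) ^ 2] := by
    ext i j
    fin_cases i <;> fin_cases j <;> rfl
  rw [cm, hmat, Basis.det_apply, Matrix.det_fin_three]
  simp only [dist_sq_eq_sum_sq_repr_vsub b _ _ (x 0), Fin.sum_univ_three, Basis.toMatrix_apply,
    OrthonormalBasis.coe_toBasis_repr_apply, vsub_self, map_zero]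
  simp [Matrix.det_succ_row_zero, Fin.sum_univ_succ, Fin.succAbove]
  ring

variable [FiniteDimensional ℝ V]

theorem exists_basis_cm_eq_eight_mul_det_sq (hV : finrank ℝ V = 3) :
    ∃ b : Basis (Fin 3) ℝ V, ∀ x : Fin 4 → P, cm x = 8 * b.det (fun i => x i.succ -ᵥ x 0) ^ 2 :=
  ⟨_, cm_eq_eight_mul_det_sq ((stdOrthonormalBasis ℝ V).reindex (finCongr hV))⟩

theorem AffineIndependent.cm_pos (hV : finrank ℝ V = 3) {x : Fin 4 → P}
    (hx : AffineIndependent ℝ x) : 0 < cm x := by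
  obtain ⟨b, hb⟩ := exists_basis_cm_eq_eight_mul_det_sq (P := P) hV
  have hli := hx.linearIndependent_vsub_succ
  have hdet : b.det (fun i => x i.succ -ᵥ x 0) ≠ 0 :=
    (b.is_basis_iff_det.mp ⟨hli, hli.span_eq_top_of_card_eq_finrank (by simp [hV])⟩).ne_zero
  rw [hb]
  positivity

theorem cm_map_affineMap (hV : finrank ℝ V = 3) (A : P →ᵃ[ℝ] P) (x : Fin 4 → P) :
    cm (fun i => A (x i)) = LinearMap.det A.linear ^ 2 * cm x := by
  obtain ⟨b, hb⟩ := exists_basis_cm_eq_eight_mul_det_sq (P := P) hV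
  have hedges : (fun i : Fin 3 => A (x i.succ) -ᵥ A (x 0)) = A.linear ∘ fun i => x i.succ -ᵥ x 0 :=
    funext fun i => (A.linearMap_vsub _ _).symm
  rw [hb, hb, hedges, Basis.det_comp]
  ring

end

/-- for affinely independent points `x₀, x₁, x₂, x₃` of `ℝ³` and an
affine map `A : ℝ³ → ℝ³` with linear part `L`, one has `cm(x₀,x₁,x₂,x₃) > 0` and
`(det L)² = cm(A x₀, …, A x₃) / cm(x₀, …, x₃)`; equivalently,
`|det L| = √(cm(A x₀, …, A x₃) / cm(x₀, …, x₃))`. -/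
theorem jacobian_from_cm_ratio
    (x : Fin 4 → EuclideanSpace ℝ (Fin 3)) (hx : AffineIndependent ℝ x)
    (A : EuclideanSpace ℝ (Fin 3) →ᵃ[ℝ] EuclideanSpace ℝ (Fin 3)) :
    0 < cm x ∧
      (LinearMap.det A.linear) ^ 2 = cm (fun i => A (x i)) / cm x ∧
      |LinearMap.det A.linear| = Real.sqrt (cm (fun i => A (x i)) / cm x) := by
  have hV : finrank ℝ (EuclideanSpace ℝ (Fin 3)) = 3 := finrank_euclideanSpace_fin
  have hpos := hx.cm_pos hV
  have hratio : cm (fun i => A (x i)) / cm x = LinearMap.det A.linear ^ 2 := by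
    rw [cm_map_affineMap hV, mul_div_cancel_right₀ _ hpos.ne']
  exact ⟨hpos, hratio.symm, by rw [hratio, Real.sqrt_sq_eq_abs]⟩
end

section
/- Let n ≥ 3 and let x₀, x₁, …, x_n, x_{n+1} and x'₀, x'₁, …, x'_n, x'_{n+1} be points of ℝ³ with x₀ ≠ x_{n+1} and x'₀ ≠ x'_{n+1}. For j = 1,…,n set σ(j) = j+1 if j < n and σ(n) = 1, and define the polynomial q_j(t) as the determinant of the 5×5 matrix [[0,1,1,1,1],[1,0,a_j,b_j,t²],[1,a_j,0,c_j,e_j],[1,b_j,c_j,0,f_j],[1,t²,e_j,f_j,0]], where a_j = dist(x₀,x_j)², b_j = dist(x₀,x_{σ(j)})², c_j = dist(x_j,x_{σ(j)})², e_j = dist(x_j,x_{n+1})², f_j = dist(x_{σ(j)},x_{n+1})²; define q'_j(t') in the same way from the primed points. Suppose that the system of n equations q'_j(t') = δ · q_j(t), j = 1,…,n, has no solution with δ > 0, t > 0 and t' > 0. Then there is no invertible affine map A : ℝ³ → ℝ³ such that A x_i = x'_i for all i = 0,1,…,n+1. -/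
/-- The Cayley–Menger-type determinant built from the six prescribed squared
distances `d01, d02, d03, d12, d13, d23` of a quadruple of points: the determinant
of the `5 × 5` matrix with `0` in the corner, `1`'s in the rest of the first row
and column, and the `d_{ij}`'s placed symmetrically. -/
noncomputable def cmQ (d01 d02 d03 d12 d13 d23 : ℝ) : ℝ :=
  Matrix.det !![0, 1, 1, 1, 1;
                1, 0, d01, d02, d03;
                1, d01, 0, d12, d13;
                1, d02, d12, 0, d23;
                1, d03, d13, d23, 0]

/-- The polynomial `q_j(t)` of the paper, for a suspension with south pole `x 0`,
north pole `x (n+1)` and equator vertices `x 1, …, x n`: the Cayley–Menger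
determinant of the quadruple `(x 0, x j, x σ(j), x (n+1))` (where `σ(j) = j+1` for
`j < n` and `σ(n) = 1`) in which the unknown squared distance between the two
poles is replaced by `t²`. -/
noncomputable def suspQ (n : ℕ) (x : ℕ → EuclideanSpace ℝ (Fin 3)) (j : ℕ) (t : ℝ) : ℝ :=
  cmQ (dist (x 0) (x j) ^ 2)
      (dist (x 0) (x (if j < n then j + 1 else 1)) ^ 2)
      (t ^ 2)
      (dist (x j) (x (if j < n then j + 1 else 1)) ^ 2)
      (dist (x j) (x (n + 1)) ^ 2)
      (dist (x (if j < n then j + 1 else 1)) (x (n + 1)) ^ 2)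

/-! At the true pole distance `t = dist x₀ x_{n+1}`, `q_j(t)` is the Cayley–Menger determinant of
the tetrahedron `x₀ x_j x_{σ(j)} x_{n+1}`, which equals `8 det (Gram) = 8 D_j²`, where `D_j` is the
determinant of its edge vectors at `x₀`. An invertible affine map `A` multiplies every `D_j` by
`det A`, so `δ = (det A)²` together with the two pole distances would solve the system. -/

theorem cmQ_eq_eight_mul_det (a b c g₁₂ g₁₃ g₂₃ : ℝ) :
    cmQ a b c (a + b - 2 * g₁₂) (a + c - 2 * g₁₃) (b + c - 2 * g₂₃)
      = 8 * !![a, g₁₂, g₁₃; g₁₂, b, g₂₃; g₁₃, g₂₃, c].det := by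
  simp [cmQ, Matrix.det_succ_row_zero, Fin.sum_univ_succ, Fin.succAbove]
  ring

open Matrix in
theorem cmQ_dist_eq_eight_mul_det_gram {V P : Type*} [NormedAddCommGroup V]
    [InnerProductSpace ℝ V] [MetricSpace P] [NormedAddTorsor V P] (p : P) (q : Fin 3 → P) :
    cmQ (dist p (q 0) ^ 2) (dist p (q 1) ^ 2) (dist p (q 2) ^ 2)
        (dist (q 0) (q 1) ^ 2) (dist (q 0) (q 2) ^ 2) (dist (q 1) (q 2) ^ 2)
      = 8 * (gram ℝ fun i => q i -ᵥ p).det := by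
  set v : Fin 3 → V := fun i => q i -ᵥ p
  have hdist : ∀ i j, dist (q i) (q j) ^ 2 = ‖v i‖ ^ 2 + ‖v j‖ ^ 2 - 2 * inner ℝ (v i) (v j) := by
    intro i j
    rw [dist_eq_norm_vsub V, ← vsub_sub_vsub_cancel_right _ _ p, norm_sub_sq_real]
    ring
  have hgram : gram ℝ v = !![‖v 0‖ ^ 2, inner ℝ (v 0) (v 1), inner ℝ (v 0) (v 2);
      inner ℝ (v 0) (v 1), ‖v 1‖ ^ 2, inner ℝ (v 1) (v 2);
      inner ℝ (v 0) (v 2), inner ℝ (v 1) (v 2), ‖v 2‖ ^ 2] := by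
    ext i j
    fin_cases i <;> fin_cases j <;>
      simp [real_inner_comm (v 0) (v 1), real_inner_comm (v 0) (v 2), real_inner_comm (v 1) (v 2)]
  simp only [dist_comm p, dist_eq_norm_vsub V _ p, hdist, hgram]
  exact cmQ_eq_eight_mul_det _ _ _ _ _ _

theorem OrthonormalBasis.det_gram_eq_sq {ι V : Type*} [Fintype ι] [DecidableEq ι]
    [NormedAddCommGroup V] [InnerProductSpace ℝ V] (b : OrthonormalBasis ι ℝ V) (v : ι → V) :
    (Matrix.gram ℝ v).det = b.toBasis.det v ^ 2 := by
  rw [Matrix.gram_eq_conjTranspose_mul b, Matrix.det_mul, Matrix.det_conjTranspose,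
    Module.Basis.det_apply, sq]
  rfl

theorem Module.Basis.det_vsub_affineMap {ι R V P : Type*} [Fintype ι] [DecidableEq ι]
    [CommRing R] [AddCommGroup V] [Module R V] [AddTorsor V P] (b : Module.Basis ι R V)
    (A : P →ᵃ[R] P) (p : P) (q : ι → P) :
    b.det (fun i => A (q i) -ᵥ A p) = LinearMap.det A.linear * b.det fun i => q i -ᵥ p := by
  simp only [← AffineMap.linearMap_vsub]
  exact b.det_comp A.linear _

theorem suspQ_dist_poles (n : ℕ) (x : ℕ → EuclideanSpace ℝ (Fin 3)) (j : ℕ) :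
    suspQ n x j (dist (x 0) (x (n + 1))) = 8 * (EuclideanSpace.basisFun (Fin 3) ℝ).toBasis.det
      (fun i => ![x j, x (if j < n then j + 1 else 1), x (n + 1)] i -ᵥ x 0) ^ 2 := by
  rw [← OrthonormalBasis.det_gram_eq_sq, ← cmQ_dist_eq_eight_mul_det_gram]
  rfl

theorem suspensions_not_affine_equivalent_general (n : ℕ)
    (x x' : ℕ → EuclideanSpace ℝ (Fin 3))
    (hx : x 0 ≠ x (n + 1)) (hx' : x' 0 ≠ x' (n + 1))
    (hsys : ¬ ∃ δ t t' : ℝ, 0 < δ ∧ 0 < t ∧ 0 < t' ∧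
      ∀ j : ℕ, 1 ≤ j → j ≤ n → suspQ n x' j t' = δ * suspQ n x j t) :
    ¬ ∃ A : EuclideanSpace ℝ (Fin 3) →ᵃ[ℝ] EuclideanSpace ℝ (Fin 3),
      Function.Bijective A ∧ ∀ i : ℕ, i ≤ n + 1 → A (x i) = x' i := by
  rintro ⟨A, hA_bij, hA⟩
  have hdet : LinearMap.det A.linear ≠ 0 :=
    (LinearEquiv.ofBijective A.linear (A.linear_bijective_iff.mpr hA_bij)).isUnit_det'.ne_zero
  refine hsys ⟨LinearMap.det A.linear ^ 2, dist (x 0) (x (n + 1)), dist (x' 0) (x' (n + 1)),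
    by positivity, dist_pos.mpr hx, dist_pos.mpr hx', fun j _ hjn => ?_⟩
  have hσ : (if j < n then j + 1 else 1) ≤ n + 1 := by split_ifs <;> omega
  have hvert : ![x' j, x' (if j < n then j + 1 else 1), x' (n + 1)]
      = fun i => A (![x j, x (if j < n then j + 1 else 1), x (n + 1)] i) := by
    funext i
    fin_cases i <;> simp [hA _ hσ, hA j (by omega), hA (n + 1) le_rfl]
  rw [suspQ_dist_poles, suspQ_dist_poles, hvert, ← hA 0 (Nat.zero_le _),
    Module.Basis.det_vsub_affineMap]
  ring

/-- Theorem on suspensions: if the system of `n` equations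
`q'_j(t') = δ · q_j(t)`, `j = 1, …, n`, has no solution with `δ > 0`, `t > 0`,
`t' > 0`, then no invertible affine map of `ℝ³` carries the vertices
`x₀, …, x_{n+1}` of the first suspension onto the corresponding vertices
`x'₀, …, x'_{n+1}` of the second one. -/
theorem suspensions_not_affine_equivalent (n : ℕ) (hn : 3 ≤ n)
    (x x' : ℕ → EuclideanSpace ℝ (Fin 3))
    (hx : x 0 ≠ x (n + 1)) (hx' : x' 0 ≠ x' (n + 1))
    (hsys : ¬ ∃ δ t t' : ℝ, 0 < δ ∧ 0 < t ∧ 0 < t' ∧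
      ∀ j : ℕ, 1 ≤ j → j ≤ n → suspQ n x' j t' = δ * suspQ n x j t) :
    ¬ ∃ A : EuclideanSpace ℝ (Fin 3) →ᵃ[ℝ] EuclideanSpace ℝ (Fin 3),
      Function.Bijective A ∧ ∀ i : ℕ, i ≤ n + 1 → A (x i) = x' i :=
  suspensions_not_affine_equivalent_general n x x' hx hx' hsys
end

section
/- Let n ≥ 3, let x₀, x₁, …, x_n, x_{n+1} be points of ℝ³ with x₀ ≠ x_{n+1}, let A : ℝ³ → ℝ³ be an invertible affine map with linear part L, and set x'_i = A x_i for i = 0,…,n+1. For j = 1,…,n set σ(j) = j+1 if j < n and σ(n) = 1, and define the polynomial q_j(t) as the determinant of the 5×5 matrix [[0,1,1,1,1],[1,0,a_j,b_j,t²],[1,a_j,0,c_j,e_j],[1,b_j,c_j,0,f_j],[1,t²,e_j,f_j,0]], where a_j = dist(x₀,x_j)², b_j = dist(x₀,x_{σ(j)})², c_j = dist(x_j,x_{σ(j)})², e_j = dist(x_j,x_{n+1})², f_j = dist(x_{σ(j)},x_{n+1})²; define q'_j(t') in the same way from the primed points. Then the numbers δ* = (det L)², t* = dist(x₀, x_{n+1})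 and t'* = dist(x'₀, x'_{n+1}) are all positive and satisfy q'_j(t'*) = δ* · q_j(t*) for every j = 1,…,n. -/
/-! By polarization, the Cayley–Menger determinant of four points `p₀, p₁, p₂, p₃` is `8` times
the Gram determinant of the edge vectors `pᵢ -ᵥ p₀`; in dimension three that Gram determinant is
the square of the determinant of the three vectors in an orthonormal basis, which an affine map
multiplies by the determinant of its linear part. With `t` the actual pole distance, `q_j(t)` is
the Cayley–Menger determinant of the tetrahedron `x₀ x_j x_σ(j) x_{n+1}`, so
`q'_j(t') = (det L)² q_j(t)`. -/

open Matrix Module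

lemma cmQ_polarized_eq_eight_mul_det (g₀₀ g₀₁ g₀₂ g₁₁ g₁₂ g₂₂ : ℝ) :
    cmQ g₀₀ g₁₁ g₂₂ (g₀₀ + g₁₁ - 2 * g₀₁) (g₀₀ + g₂₂ - 2 * g₀₂) (g₁₁ + g₂₂ - 2 * g₁₂) =
      8 * det !![g₀₀, g₀₁, g₀₂; g₀₁, g₁₁, g₁₂; g₀₂, g₁₂, g₂₂] := by
  simp [cmQ, det_succ_row_zero, Fin.sum_univ_succ, Fin.succAbove]
  ring

section InnerProductSpace

variable {V P : Type*} [NormedAddCommGroup V] [InnerProductSpace ℝ V] [MetricSpace P]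
  [NormedAddTorsor V P]

lemma cmQ_norm_sq_eq_eight_mul_det_gram (v : Fin 3 → V) :
    cmQ (‖v 0‖ ^ 2) (‖v 1‖ ^ 2) (‖v 2‖ ^ 2) (‖v 0 - v 1‖ ^ 2) (‖v 0 - v 2‖ ^ 2)
      (‖v 1 - v 2‖ ^ 2) = 8 * (gram ℝ v).det := by
  rw [eta_fin_three (gram ℝ v), norm_sub_sq_real, norm_sub_sq_real, norm_sub_sq_real]
  simp only [gram_apply, ← real_inner_self_eq_norm_sq]
  rw [real_inner_comm (v 1) (v 0), real_inner_comm (v 2) (v 0), real_inner_comm (v 2) (v 1),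
    ← cmQ_polarized_eq_eight_mul_det]
  congr 1 <;> ring

lemma cmQ_dist_sq_eq_eight_mul_det_gram (p₀ p₁ p₂ p₃ : P) :
    cmQ (dist p₀ p₁ ^ 2) (dist p₀ p₂ ^ 2) (dist p₀ p₃ ^ 2) (dist p₁ p₂ ^ 2) (dist p₁ p₃ ^ 2)
      (dist p₂ p₃ ^ 2) = 8 * (gram ℝ ![p₁ -ᵥ p₀, p₂ -ᵥ p₀, p₃ -ᵥ p₀]).det := by
  rw [← cmQ_norm_sq_eq_eight_mul_det_gram, dist_comm p₀ p₁, dist_comm p₀ p₂, dist_comm p₀ p₃]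
  simp [dist_eq_norm_vsub V]

lemma det_gram_eq_sq_det {ι : Type*} [Fintype ι] [DecidableEq ι] (b : OrthonormalBasis ι ℝ V)
    (v : ι → V) : (gram ℝ v).det = b.toBasis.det v ^ 2 := by
  rw [gram_eq_conjTranspose_mul b, det_mul, det_conjTranspose, star_trivial, ← sq,
    Basis.det_apply]
  rfl

lemma det_gram_comp {ι : Type*} [Fintype ι] [DecidableEq ι] [FiniteDimensional ℝ V]
    (hι : finrank ℝ V = Fintype.card ι) (f : V →ₗ[ℝ] V) (v : ι → V) :
    (gram ℝ (f ∘ v)).det = LinearMap.det f ^ 2 * (gram ℝ v).det := by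
  let b := (stdOrthonormalBasis ℝ V).reindex (Fintype.equivFinOfCardEq hι.symm).symm
  rw [det_gram_eq_sq_det b, det_gram_eq_sq_det b, Basis.det_comp, mul_pow]

lemma cmQ_dist_sq_map [FiniteDimensional ℝ V] (hV : finrank ℝ V = 3) (A : P →ᵃ[ℝ] P)
    (p₀ p₁ p₂ p₃ : P) :
    cmQ (dist (A p₀) (A p₁) ^ 2) (dist (A p₀) (A p₂) ^ 2) (dist (A p₀) (A p₃) ^ 2)
        (dist (A p₁) (A p₂) ^ 2) (dist (A p₁) (A p₃) ^ 2) (dist (A p₂) (A p₃) ^ 2) =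
      LinearMap.det A.linear ^ 2 *
        cmQ (dist p₀ p₁ ^ 2) (dist p₀ p₂ ^ 2) (dist p₀ p₃ ^ 2) (dist p₁ p₂ ^ 2)
          (dist p₁ p₃ ^ 2) (dist p₂ p₃ ^ 2) := by
  have hv : ![A p₁ -ᵥ A p₀, A p₂ -ᵥ A p₀, A p₃ -ᵥ A p₀] =
      A.linear ∘ ![p₁ -ᵥ p₀, p₂ -ᵥ p₀, p₃ -ᵥ p₀] := by
    ext1 i
    fin_cases i <;> simp [AffineMap.linearMap_vsub]
  rw [cmQ_dist_sq_eq_eight_mul_det_gram, cmQ_dist_sq_eq_eight_mul_det_gram, hv,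
    det_gram_comp (by simpa using hV)]
  ring

end InnerProductSpace

theorem affine_equivalence_solves_suspension_system_general (n : ℕ)
    (x : ℕ → EuclideanSpace ℝ (Fin 3)) (hx : x 0 ≠ x (n + 1))
    (A : EuclideanSpace ℝ (Fin 3) →ᵃ[ℝ] EuclideanSpace ℝ (Fin 3))
    (hA : Function.Bijective A)
    (x' : ℕ → EuclideanSpace ℝ (Fin 3)) (hx' : ∀ i : ℕ, x' i = A (x i)) :
    0 < (LinearMap.det A.linear) ^ 2 ∧
      0 < dist (x 0) (x (n + 1)) ∧
      0 < dist (x' 0) (x' (n + 1)) ∧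
      ∀ j : ℕ, 1 ≤ j → j ≤ n →
        suspQ n x' j (dist (x' 0) (x' (n + 1))) =
          (LinearMap.det A.linear) ^ 2 * suspQ n x j (dist (x 0) (x (n + 1))) := by
  have hdet : LinearMap.det A.linear ≠ 0 :=
    (LinearEquiv.ofBijective A.linear ((AffineMap.linear_bijective_iff A).2 hA)).isUnit_det'.ne_zero
  refine ⟨pow_two_pos_of_ne_zero hdet, dist_pos.2 hx, ?_, fun j _ _ => ?_⟩
  · rw [hx', hx']
    exact dist_pos.2 (hA.injective.ne hx)
  · simp only [suspQ, hx']
    exact cmQ_dist_sq_map finrank_euclideanSpace_fin A _ _ _ _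

/-- if `A : ℝ³ → ℝ³` is an invertible affine map with linear part `L`
and `x'_i = A x_i`, then `δ* = (det L)²`, `t* = dist(x₀, x_{n+1})` and
`t'* = dist(x'₀, x'_{n+1})` are positive and satisfy
`q'_j(t'*) = δ* · q_j(t*)` for every `j = 1, …, n`. -/
theorem affine_equivalence_solves_suspension_system (n : ℕ) (hn : 3 ≤ n)
    (x : ℕ → EuclideanSpace ℝ (Fin 3)) (hx : x 0 ≠ x (n + 1))
    (A : EuclideanSpace ℝ (Fin 3) →ᵃ[ℝ] EuclideanSpace ℝ (Fin 3))
    (hA : Function.Bijective A)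
    (x' : ℕ → EuclideanSpace ℝ (Fin 3)) (hx' : ∀ i : ℕ, x' i = A (x i)) :
    0 < (LinearMap.det A.linear) ^ 2 ∧
      0 < dist (x 0) (x (n + 1)) ∧
      0 < dist (x' 0) (x' (n + 1)) ∧
      ∀ j : ℕ, 1 ≤ j → j ≤ n →
        suspQ n x' j (dist (x' 0) (x' (n + 1))) =
          (LinearMap.det A.linear) ^ 2 * suspQ n x j (dist (x 0) (x (n + 1))) :=
  affine_equivalence_solves_suspension_system_general n x hx A hA x' hx'
end

section
/- Let x₀, x₁, x₂, x₃, x₄ be points of ℝ³ with x₁ ≠ x₃ and x₂ ≠ x₄, let A : ℝ³ → ℝ³ be an invertible affine map with linear part L, and set x'_i = A x_i for i = 0,…,4. Define the polynomials: ⁴q₀(t,s) as the Cayley–Menger determinant of the quadruple (x₁,x₂,x₃,x₄) in which the two entries dist(x₁,x₃)² are replaced by t² and the two entries dist(x₂,x₄)² are replaced by s²; ⁴q₁(s) as that of (x₀,x₂,x₃,x₄) with dist(x₂,x₄)² replaced by s²; ⁴q₂(t) as that of (x₀,x₁,x₃,x₄) with dist(x₁,x₃)² replaced by t²; ⁴q₃(s)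 as that of (x₀,x₁,x₂,x₄) with dist(x₂,x₄)² replaced by s²; ⁴q₄(t) as that of (x₀,x₁,x₂,x₃) with dist(x₁,x₃)² replaced by t²; and define ⁴q'₀,…,⁴q'₄ in the same way from the primed points. Then the system of five equations ⁴q'₀(t',s') = α·⁴q₀(t,s), ⁴q'₁(s') = α·⁴q₁(s), ⁴q'₂(t') = α·⁴q₂(t), ⁴q'₃(s') = α·⁴q₃(s), ⁴q'₄(t') = α·⁴q₄(t) has a solution with α > 0, t > 0, s > 0, t' > 0, s' > 0; namely α = (det L)², t = dist(x₁,x₃), s = dist(x₂,x₄), t' = dist(x'₁,x'₃), s' = dist(x'₂,x'₄). -/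
/-- `⁴q₀(t,s)`: the Cayley–Menger determinant of the quadruple `(x₁,x₂,x₃,x₄)`
in which `dist(x₁,x₃)²` is replaced by `t²` and `dist(x₂,x₄)²` by `s²`. -/
noncomputable def q40 (x : Fin 5 → EuclideanSpace ℝ (Fin 3)) (t s : ℝ) : ℝ :=
  cmQ (dist (x 1) (x 2) ^ 2) (t ^ 2) (dist (x 1) (x 4) ^ 2)
      (dist (x 2) (x 3) ^ 2) (s ^ 2) (dist (x 3) (x 4) ^ 2)

/-- `⁴q₁(s)`: the Cayley–Menger determinant of the quadruple `(x₀,x₂,x₃,x₄)`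
in which `dist(x₂,x₄)²` is replaced by `s²`. -/
noncomputable def q41 (x : Fin 5 → EuclideanSpace ℝ (Fin 3)) (s : ℝ) : ℝ :=
  cmQ (dist (x 0) (x 2) ^ 2) (dist (x 0) (x 3) ^ 2) (dist (x 0) (x 4) ^ 2)
      (dist (x 2) (x 3) ^ 2) (s ^ 2) (dist (x 3) (x 4) ^ 2)

/-- `⁴q₂(t)`: the Cayley–Menger determinant of the quadruple `(x₀,x₁,x₃,x₄)`
in which `dist(x₁,x₃)²` is replaced by `t²`. -/
noncomputable def q42 (x : Fin 5 → EuclideanSpace ℝ (Fin 3)) (t : ℝ) : ℝ :=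
  cmQ (dist (x 0) (x 1) ^ 2) (dist (x 0) (x 3) ^ 2) (dist (x 0) (x 4) ^ 2)
      (t ^ 2) (dist (x 1) (x 4) ^ 2) (dist (x 3) (x 4) ^ 2)

/-- `⁴q₃(s)`: the Cayley–Menger determinant of the quadruple `(x₀,x₁,x₂,x₄)`
in which `dist(x₂,x₄)²` is replaced by `s²`. -/
noncomputable def q43 (x : Fin 5 → EuclideanSpace ℝ (Fin 3)) (s : ℝ) : ℝ :=
  cmQ (dist (x 0) (x 1) ^ 2) (dist (x 0) (x 2) ^ 2) (dist (x 0) (x 4) ^ 2)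
      (dist (x 1) (x 2) ^ 2) (dist (x 1) (x 4) ^ 2) (s ^ 2)

/-- `⁴q₄(t)`: the Cayley–Menger determinant of the quadruple `(x₀,x₁,x₂,x₃)`
in which `dist(x₁,x₃)²` is replaced by `t²`. -/
noncomputable def q44 (x : Fin 5 → EuclideanSpace ℝ (Fin 3)) (t : ℝ) : ℝ :=
  cmQ (dist (x 0) (x 1) ^ 2) (dist (x 0) (x 2) ^ 2) (dist (x 0) (x 3) ^ 2)
      (dist (x 1) (x 2) ^ 2) (t ^ 2) (dist (x 2) (x 3) ^ 2)

/-!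
Lifting `p ↦ (1, p, ‖p‖²)` to the paraboloid in `ℝ⁵` and adjoining `e = (0, 0, 0, 0, 1)` turns the
Cayley–Menger matrix of `y₀, …, y₃` into the Gram matrix `U F Uᵀ` of the lifted points for the
quadratic form `F(v, w) = v₀w₄ + v₄w₀ - 2 (v₁w₁ + v₂w₂ + v₃w₃)`, under which lifted points pair to
their squared distance and pair with `e` to `1`. Hence the Cayley–Menger determinant equals
`det F · (det U)² = 8 · det(y₁ - y₀, y₂ - y₀, y₃ - y₀)²`. An affine map multiplies the edge
vectors `yᵢ - y₀` by its linear part `L`, so it multiplies every Cayley–Menger determinant by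
`(det L)²`; with the true diagonals plugged in, the five polynomials `⁴qⱼ` are such determinants.
-/

open scoped Matrix

local notation "ℝ³" => EuclideanSpace ℝ (Fin 3)

noncomputable section

theorem AffineMap.det_linear_ne_zero_of_bijective {k V P : Type*} [Field k] [AddCommGroup V]
    [Module k V] [FiniteDimensional k V] [AddTorsor V P] {A : P →ᵃ[k] P}
    (hA : Function.Bijective A) : LinearMap.det A.linear ≠ 0 :=
  (LinearEquiv.ofBijective A.linear ((AffineMap.linear_bijective_iff A).2 hA)).isUnit_det'.ne_zero

section EdgeMatrix

variable {n : ℕ}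

def edgeMatrix (y : Fin (n + 1) → EuclideanSpace ℝ (Fin n)) : Matrix (Fin n) (Fin n) ℝ :=
  Matrix.of fun i j => (y j.succ - y 0) i

theorem edgeMatrix_comp_affineMap (A : EuclideanSpace ℝ (Fin n) →ᵃ[ℝ] EuclideanSpace ℝ (Fin n))
    (y : Fin (n + 1) → EuclideanSpace ℝ (Fin n)) :
    edgeMatrix (A ∘ y) =
      LinearMap.toMatrix (EuclideanSpace.basisFun (Fin n) ℝ).toBasis
        (EuclideanSpace.basisFun (Fin n) ℝ).toBasis A.linear * edgeMatrix y := by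
  ext i j
  have h := congrFun (LinearMap.toMatrix_mulVec_repr (EuclideanSpace.basisFun (Fin n) ℝ).toBasis
    (EuclideanSpace.basisFun (Fin n) ℝ).toBasis A.linear (y j.succ - y 0)) i
  simp only [EuclideanSpace.basisFun_repr, OrthonormalBasis.coe_toBasis_repr_apply] at h
  simp only [edgeMatrix, Matrix.of_apply, Function.comp_apply, Matrix.mul_apply]
  rw [← vsub_eq_sub, ← AffineMap.linearMap_vsub, vsub_eq_sub, ← h]
  rfl

end EdgeMatrix

def cayleyMenger (y : Fin 4 → ℝ³) : ℝ :=
  cmQ (dist (y 0) (y 1) ^ 2) (dist (y 0) (y 2) ^ 2) (dist (y 0) (y 3) ^ 2)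
      (dist (y 1) (y 2) ^ 2) (dist (y 1) (y 3) ^ 2) (dist (y 2) (y 3) ^ 2)

def paraboloidLift (p : ℝ³) : Fin 5 → ℝ := ![1, p 0, p 1, p 2, p 0 ^ 2 + p 1 ^ 2 + p 2 ^ 2]

def liftMatrix (y : Fin 4 → ℝ³) : Matrix (Fin 5) (Fin 5) ℝ :=
  Matrix.of ![![0, 0, 0, 0, 1], paraboloidLift (y 0), paraboloidLift (y 1),
    paraboloidLift (y 2), paraboloidLift (y 3)]

def liftForm : Matrix (Fin 5) (Fin 5) ℝ :=
  !![0, 0, 0, 0, 1; 0, -2, 0, 0, 0; 0, 0, -2, 0, 0; 0, 0, 0, -2, 0; 1, 0, 0, 0, 0]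

theorem EuclideanSpace.dist_sq_eq_fin_three (p q : ℝ³) :
    dist p q ^ 2 = (p 0 - q 0) ^ 2 + (p 1 - q 1) ^ 2 + (p 2 - q 2) ^ 2 := by
  rw [EuclideanSpace.dist_eq, Real.sq_sqrt (by positivity)]
  simp [Fin.sum_univ_three, Real.dist_eq, sq_abs]

theorem cayleyMenger_eq_det_gram (y : Fin 4 → ℝ³) :
    cayleyMenger y = (liftMatrix y * liftForm * (liftMatrix y)ᵀ).det := by
  unfold cayleyMenger cmQ
  congr 1
  ext i j
  fin_cases i <;> fin_cases j <;>
    simp [Matrix.mul_apply, Fin.sum_univ_five, liftMatrix, liftForm, paraboloidLift,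
      EuclideanSpace.dist_sq_eq_fin_three] <;> ring

theorem det_liftForm : liftForm.det = 8 := by
  simp [liftForm, Matrix.det_succ_row_zero, Fin.sum_univ_succ, Fin.succAbove]
  norm_num

theorem det_liftMatrix (y : Fin 4 → ℝ³) : (liftMatrix y).det = (edgeMatrix y).det := by
  simp [liftMatrix, paraboloidLift, edgeMatrix, Matrix.det_succ_row_zero, Fin.sum_univ_succ,
    Fin.succAbove]
  ring

theorem cayleyMenger_eq_eight_mul_det_edgeMatrix_sq (y : Fin 4 → ℝ³) :
    cayleyMenger y = 8 * (edgeMatrix y).det ^ 2 := by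
  rw [cayleyMenger_eq_det_gram, Matrix.det_mul, Matrix.det_mul, Matrix.det_transpose,
    det_liftForm, det_liftMatrix]
  ring

theorem cayleyMenger_comp_affineMap (A : ℝ³ →ᵃ[ℝ] ℝ³) (y : Fin 4 → ℝ³) :
    cayleyMenger (A ∘ y) = LinearMap.det A.linear ^ 2 * cayleyMenger y := by
  rw [cayleyMenger_eq_eight_mul_det_edgeMatrix_sq, cayleyMenger_eq_eight_mul_det_edgeMatrix_sq,
    edgeMatrix_comp_affineMap, Matrix.det_mul, LinearMap.det_toMatrix]
  ring

end

/-- Lemma 2 of the paper: if `x₀,…,x₄ ∈ ℝ³` (with `x₁ ≠ x₃`,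
`x₂ ≠ x₄`) are carried by an invertible affine map `A` with linear part `L` to
`x'₀,…,x'₄`, then the system `⁴q'_j = α · ⁴q_j` has an all-positive solution,
namely `α = (det L)²`, `t = dist(x₁,x₃)`, `s = dist(x₂,x₄)`, `t' = dist(x'₁,x'₃)`,
`s' = dist(x'₂,x'₄)`. -/
theorem valency_four_system_has_positive_solution
    (x : Fin 5 → EuclideanSpace ℝ (Fin 3)) (h13 : x 1 ≠ x 3) (h24 : x 2 ≠ x 4)
    (A : EuclideanSpace ℝ (Fin 3) →ᵃ[ℝ] EuclideanSpace ℝ (Fin 3))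
    (hA : Function.Bijective A)
    (x' : Fin 5 → EuclideanSpace ℝ (Fin 3)) (hx' : ∀ i, x' i = A (x i)) :
    0 < (LinearMap.det A.linear) ^ 2 ∧
      0 < dist (x 1) (x 3) ∧ 0 < dist (x 2) (x 4) ∧
      0 < dist (x' 1) (x' 3) ∧ 0 < dist (x' 2) (x' 4) ∧
      q40 x' (dist (x' 1) (x' 3)) (dist (x' 2) (x' 4)) =
        (LinearMap.det A.linear) ^ 2 * q40 x (dist (x 1) (x 3)) (dist (x 2) (x 4)) ∧
      q41 x' (dist (x' 2) (x' 4)) =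
        (LinearMap.det A.linear) ^ 2 * q41 x (dist (x 2) (x 4)) ∧
      q42 x' (dist (x' 1) (x' 3)) =
        (LinearMap.det A.linear) ^ 2 * q42 x (dist (x 1) (x 3)) ∧
      q43 x' (dist (x' 2) (x' 4)) =
        (LinearMap.det A.linear) ^ 2 * q43 x (dist (x 2) (x 4)) ∧
      q44 x' (dist (x' 1) (x' 3)) =
        (LinearMap.det A.linear) ^ 2 * q44 x (dist (x 1) (x 3)) := by
  obtain rfl : x' = A ∘ x := funext hx'
  have hdet : LinearMap.det A.linear ≠ 0 := AffineMap.det_linear_ne_zero_of_bijective hA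
  have scale (σ : Fin 4 → Fin 5) :
      cayleyMenger (A ∘ x ∘ σ) = LinearMap.det A.linear ^ 2 * cayleyMenger (x ∘ σ) :=
    cayleyMenger_comp_affineMap A (x ∘ σ)
  exact ⟨by positivity, dist_pos.2 h13, dist_pos.2 h24, dist_pos.2 (hA.injective.ne h13),
    dist_pos.2 (hA.injective.ne h24), scale ![1, 2, 3, 4], scale ![0, 2, 3, 4],
    scale ![0, 1, 3, 4], scale ![0, 1, 2, 4], scale ![0, 1, 2, 3]⟩
end
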